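/- For every n ≥ 1, the number of revised ascent sequences of length n avoiding the pattern 321 equals 2^{n−1} − n + 1. -/

import Mathlib

/-!
A 321-avoiding revised ascent sequence `x` with maximum `m ≥ 2` starts with `m`: the leftmost `m`
is a nub, hence an ascent bottom unless it sits at position `0`. The entries other than `m` then
weakly increase, since a descent after one of them would form a `321` with the initial `m`. A
repeated entry is not a nub, hence not an ascent bottom, so from its second occurrence on `x` is
constant. Consequently `x` is determined by the set `A` of first occurrences of the values below
`m` together with the last position `q` of `m`: on `A` the entries are `1, …, m` in increasing
order, off `A` they are `m` before `q` and `m - 1` after it. Conversely this word is a 321-avoiding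
revised ascent sequence for every `A ⊆ {1, …, n - 1}` with `|A| ≥ 2`, and together with the
constant word `1⋯1` this gives `(2^(n-1) - (n - 1) - 1) + 1` sequences.
-/

/-- An endofunction of size `n`: values in `{1,…,n}` (indices are `Fin n`, 0-based). -/
def IsEndo (n : ℕ) (x : Fin n → ℕ) : Prop := ∀ i, 1 ≤ x i ∧ x i ≤ n

/-- The maximum value of `x`. -/
def maxVal (n : ℕ) (x : Fin n → ℕ) : ℕ := Finset.univ.sup x

/-- A Cayley permutation: an endofunction whose image is `{1,…,max x}`. -/
def IsCayley (n : ℕ) (x : Fin n → ℕ) : Prop :=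
  IsEndo n x ∧ ∀ v, 1 ≤ v → v ≤ maxVal n x → ∃ i, x i = v

/-- Ascent bottoms (0-based; index 0 always included). -/
def Ascbot (n : ℕ) (x : Fin n → ℕ) : Set (Fin n) :=
  {i | i.1 = 0 ∨ ∃ h : i.1 + 1 < n, x i < x ⟨i.1 + 1, h⟩}

/-- Indices of leftmost occurrences of values. -/
def Nub (n : ℕ) (x : Fin n → ℕ) : Set (Fin n) :=
  {i | ∀ j, j < i → x j ≠ x i}

/-- A revised ascent sequence. -/
def IsRAS (n : ℕ) (x : Fin n → ℕ) : Prop :=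
  IsCayley n x ∧ Ascbot n x = Nub n x

/-- `x` avoids the pattern `321`. -/
def Avoids321 (n : ℕ) (x : Fin n → ℕ) : Prop :=
  ¬ ∃ i j k : Fin n, i < j ∧ j < k ∧ x j < x i ∧ x k < x j

open Finset

def rankIn {α : Type*} [LinearOrder α] (A : Finset α) (a : α) : ℕ := #{b ∈ A | b ≤ a}

section rankIn

variable {α : Type*} [LinearOrder α] {A : Finset α} {a b : α}

lemma rankIn_le_card : rankIn A a ≤ #A := card_filter_le _ _

lemma one_le_rankIn (ha : a ∈ A) : 1 ≤ rankIn A a :=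
  card_pos.2 ⟨a, mem_filter.2 ⟨ha, le_rfl⟩⟩

lemma rankIn_of_forall_le (h : ∀ b ∈ A, b ≤ a) : rankIn A a = #A :=
  congrArg card (filter_true_of_mem h)

lemma rankIn_strictMonoOn : StrictMonoOn (rankIn A) A := by
  intro a _ b hb hab
  refine card_lt_card ((ssubset_iff_of_subset ?_).2 ⟨b, mem_filter.2 ⟨hb, le_rfl⟩, ?_⟩)
  · exact monotone_filter_right A fun c _ hc => hc.trans hab.le
  · simp [hab]

lemma rankIn_lt_card (hb : b ∈ A) (ha : a ∈ A) (hab : a < b) : rankIn A a < #A :=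
  (rankIn_strictMonoOn ha hb hab).trans_le rankIn_le_card

lemma image_rankIn : A.image (rankIn A) = Icc 1 #A := by
  refine eq_of_subset_of_card_le (fun v hv => ?_) ?_
  · obtain ⟨a, ha, rfl⟩ := mem_image.1 hv
    exact mem_Icc.2 ⟨one_le_rankIn ha, rankIn_le_card⟩
  · rw [card_image_of_injOn rankIn_strictMonoOn.injOn, Nat.card_Icc, Nat.add_sub_cancel]

lemma StrictMonoOn.eq_rankIn {f : α → ℕ} (hf : StrictMonoOn f A) (hpos : ∀ b ∈ A, 1 ≤ f b)
    (hsurj : ∀ v, 1 ≤ v → v ≤ f a → ∃ b ∈ A, f b = v) (ha : a ∈ A) : f a = rankIn A a := by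
  have himage : {b ∈ A | b ≤ a}.image f = Icc 1 (f a) := by
    ext v
    simp only [mem_image, mem_filter, mem_Icc]
    constructor
    · rintro ⟨b, ⟨hb, hba⟩, rfl⟩
      exact ⟨hpos b hb, hf.monotoneOn hb ha hba⟩
    · rintro ⟨hv1, hv2⟩
      obtain ⟨b, hb, rfl⟩ := hsurj v hv1 hv2
      exact ⟨b, ⟨hb, (hf.le_iff_le hb ha).1 hv2⟩, rfl⟩
  have hcard := card_image_of_injOn (hf.mono (coe_subset.2 (filter_subset (· ≤ a) A))).injOn
  rw [himage, Nat.card_Icc, Nat.add_sub_cancel] at hcard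
  exact hcard

end rankIn

lemma card_filter_two_le_card_powerset {α : Type*} [DecidableEq α] (S : Finset α) :
    #{A ∈ S.powerset | 2 ≤ #A} + #S + 1 = 2 ^ #S := by
  have hsplit := card_filter_add_card_filter_not (s := S.powerset) (fun A => 2 ≤ #A)
  have hsmall : {A ∈ S.powerset | ¬ 2 ≤ #A} = powersetCard 0 S ∪ powersetCard 1 S := by
    rw [powersetCard_eq_filter, powersetCard_eq_filter, ← filter_or]
    exact filter_congr fun A _ => by omega
  have hdisj : Disjoint (powersetCard 0 S) (powersetCard 1 S) :=
    disjoint_left.2 fun A h0 h1 => by rw [mem_powersetCard] at h0 h1; omega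
  rw [hsmall, card_union_of_disjoint hdisj, card_powersetCard, card_powersetCard,
    Nat.choose_zero_right, Nat.choose_one_right, card_powerset] at hsplit
  omega

def IsShape {n : ℕ} (A : Finset (Fin n)) : Prop := (∀ a ∈ A, (a : ℕ) ≠ 0) ∧ 2 ≤ #A

def shapeWord {n : ℕ} (A : Finset (Fin n)) (i : Fin n) : ℕ :=
  if i ∈ A then rankIn A i else if ∃ a ∈ A, i < a then #A else #A - 1

section shapeWord

variable {n : ℕ} {A : Finset (Fin n)} {q i : Fin n}

lemma shapeWord_of_mem (hi : i ∈ A) : shapeWord A i = rankIn A i := if_pos hi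

lemma shapeWord_of_lt (hq : q ∈ A) (hi : i ∉ A) (hiq : i < q) : shapeWord A i = #A := by
  rw [shapeWord, if_neg hi, if_pos ⟨q, hq, hiq⟩]

lemma shapeWord_of_gt (hq : IsGreatest (A : Set (Fin n)) q) (hqi : q < i) :
    shapeWord A i = #A - 1 := by
  have hi : i ∉ A := fun h => not_lt_of_ge (hq.2 h) hqi
  have hlt : ¬ ∃ a ∈ A, i < a := fun ⟨a, ha, hia⟩ => not_lt_of_ge (hq.2 ha) (hqi.trans hia)
  rw [shapeWord, if_neg hi, if_neg hlt]

lemma shapeWord_of_isGreatest (hq : IsGreatest (A : Set (Fin n)) q) : shapeWord A q = #A := by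
  rw [shapeWord_of_mem hq.1, rankIn_of_forall_le fun a ha => hq.2 ha]

lemma shapeWord_le_card : shapeWord A i ≤ #A := by
  unfold shapeWord
  split_ifs
  · exact rankIn_le_card
  · exact le_rfl
  · omega

lemma mem_or_gt_of_shapeWord_ne_card (hq : IsGreatest (A : Set (Fin n)) q)
    (hi : shapeWord A i ≠ #A) : (i ∈ A ∧ i < q) ∨ q < i := by
  rcases lt_trichotomy i q with hiq | rfl | hqi
  · by_cases hiA : i ∈ A
    · exact Or.inl ⟨hiA, hiq⟩
    · exact absurd (shapeWord_of_lt hq.1 hiA hiq) hi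
  · exact absurd (shapeWord_of_isGreatest hq) hi
  · exact Or.inr hqi

lemma shapeWord_le_of_ne_card (hq : IsGreatest (A : Set (Fin n)) q) {j k : Fin n} (hjk : j < k)
    (hj : shapeWord A j ≠ #A) : shapeWord A j ≤ shapeWord A k := by
  rcases mem_or_gt_of_shapeWord_ne_card hq hj with ⟨hjA, hjq⟩ | hqj
  · have hlt := rankIn_lt_card hq.1 hjA hjq
    rw [shapeWord_of_mem hjA]
    by_cases hkA : k ∈ A
    · rw [shapeWord_of_mem hkA]
      exact (rankIn_strictMonoOn hjA hkA hjk).le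
    rcases lt_or_gt_of_ne (show k ≠ q from fun h => hkA (h ▸ hq.1)) with hkq | hqk
    · rw [shapeWord_of_lt hq.1 hkA hkq]
      omega
    · rw [shapeWord_of_gt hq hqk]
      omega
  · rw [shapeWord_of_gt hq hqj, shapeWord_of_gt hq (hqj.trans hjk)]

lemma mem_ascbot_shapeWord_iff (hq : IsGreatest (A : Set (Fin n)) q) :
    i ∈ Ascbot n (shapeWord A) ↔ (i : ℕ) = 0 ∨ (i ∈ A ∧ i < q) := by
  refine or_congr_right ⟨?_, ?_⟩
  · rintro ⟨h, hasc⟩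
    have hle := shapeWord_le_card (A := A) (i := ⟨i + 1, h⟩)
    refine (mem_or_gt_of_shapeWord_ne_card hq (i := i) (by omega)).resolve_right fun hqi => ?_
    have hqs : q < ⟨i + 1, h⟩ := by simp only [Fin.lt_def]; omega
    rw [shapeWord_of_gt hq hqi, shapeWord_of_gt hq hqs] at hasc
    exact lt_irrefl _ hasc
  · rintro ⟨hiA, hiq⟩
    have h : (i : ℕ) + 1 < n := by omega
    refine ⟨h, ?_⟩
    rw [shapeWord_of_mem hiA]
    by_cases hsA : (⟨i + 1, h⟩ : Fin n) ∈ A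
    · rw [shapeWord_of_mem hsA]
      exact rankIn_strictMonoOn hiA hsA (show i < ⟨i + 1, h⟩ by simp only [Fin.lt_def]; omega)
    · have hsq : (⟨i + 1, h⟩ : Fin n) ≤ q := by simp only [Fin.le_def]; omega
      replace hsq := lt_of_le_of_ne hsq fun h => hsA (h ▸ hq.1)
      rw [shapeWord_of_lt hq.1 hsA hsq]
      exact rankIn_lt_card hq.1 hiA hiq

lemma IsShape.nonempty (hA : IsShape A) : A.Nonempty := card_pos.1 (by have := hA.2; omega)

lemma IsShape.shapeWord_zero (hA : IsShape A) (h : 0 < n) : shapeWord A ⟨0, h⟩ = #A := by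
  have hq := A.isGreatest_max' hA.nonempty
  have hq0 := hA.1 _ hq.1
  exact shapeWord_of_lt hq.1 (fun h => hA.1 _ h rfl) (by simp only [Fin.lt_def]; omega)

lemma mem_nub_shapeWord_iff (hA : IsShape A) (hq : IsGreatest (A : Set (Fin n)) q) :
    i ∈ Nub n (shapeWord A) ↔ (i : ℕ) = 0 ∨ (i ∈ A ∧ i < q) := by
  constructor
  · intro hi
    by_contra! h
    have h0 : (⟨0, i.pos⟩ : Fin n) < i := by simp only [Fin.lt_def]; omega
    rcases mem_or_gt_of_shapeWord_ne_card hq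
      (fun hc => hi _ h0 ((hA.shapeWord_zero i.pos).trans hc.symm)) with ⟨hiA, hiq⟩ | hqi
    · exact not_lt_of_ge (h.2 hiA) hiq
    obtain ⟨a, ha, hra⟩ : ∃ a ∈ A, rankIn A a = #A - 1 := by
      rw [← mem_image, image_rankIn, mem_Icc]
      have := hA.2
      omega
    have haq : a < q := lt_of_le_of_ne (hq.2 ha) fun h => by
      rw [h, rankIn_of_forall_le fun b hb => hq.2 hb] at hra
      have := hA.2
      omega
    exact hi a (haq.trans hqi) (by rw [shapeWord_of_mem ha, hra, shapeWord_of_gt hq hqi])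
  · rintro (h0 | ⟨hiA, hiq⟩) j hji
    · omega
    rw [shapeWord_of_mem hiA]
    by_cases hjA : j ∈ A
    · rw [shapeWord_of_mem hjA]
      exact (rankIn_strictMonoOn hjA hiA hji).ne
    · rw [shapeWord_of_lt hq.1 hjA (hji.trans hiq)]
      exact (rankIn_lt_card hq.1 hiA hiq).ne'

lemma IsShape.isRAS (hA : IsShape A) : IsRAS n (shapeWord A) := by
  have hq := A.isGreatest_max' hA.nonempty
  refine ⟨⟨fun i => ⟨?_, shapeWord_le_card.trans ((card_le_univ A).trans_eq (Fintype.card_fin n))⟩,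
    fun v hv1 hv2 => ?_⟩, ?_⟩
  · unfold shapeWord
    have := hA.2
    split_ifs with hi
    · exact one_le_rankIn hi
    · omega
    · omega
  · have hv : v ∈ A.image (rankIn A) := by
      rw [image_rankIn, mem_Icc]
      exact ⟨hv1, hv2.trans (Finset.sup_le fun i _ => shapeWord_le_card)⟩
    obtain ⟨a, ha, rfl⟩ := mem_image.1 hv
    exact ⟨a, shapeWord_of_mem ha⟩
  · ext i
    rw [mem_ascbot_shapeWord_iff hq, mem_nub_shapeWord_iff hA hq]

lemma IsShape.avoids321 (hA : IsShape A) : Avoids321 n (shapeWord A) := by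
  rintro ⟨i, j, k, -, hjk, hji, hkj⟩
  have := shapeWord_le_card (A := A) (i := i)
  exact not_lt_of_ge (shapeWord_le_of_ne_card (A.isGreatest_max' hA.nonempty) hjk (by omega)) hkj

lemma le_of_isGreatest_of_shapeWord_eq {A B : Finset (Fin n)} {p q : Fin n}
    (hp : IsGreatest (A : Set (Fin n)) p) (hq : IsGreatest (B : Set (Fin n)) q) (hAB : #A = #B) (h : shapeWord A = shapeWord B) :
    q ≤ p := by
  by_contra! hpq
  have := congrFun h q
  rw [shapeWord_of_gt hp hpq, shapeWord_of_isGreatest hq] at this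
  have := card_pos.2 ⟨p, hp.1⟩
  omega

lemma subset_of_shapeWord_eq {A B : Finset (Fin n)} (hA : IsGreatest (A : Set (Fin n)) q)
    (hB : IsGreatest (B : Set (Fin n)) q) (hAB : #A = #B) (h : shapeWord A = shapeWord B) :
    A ⊆ B := by
  intro a ha
  by_contra haB
  have haq : a < q := lt_of_le_of_ne (hA.2 ha) fun h => haB (h ▸ hB.1)
  have := congrFun h a
  rw [shapeWord_of_mem ha, shapeWord_of_lt hB.1 haB haq] at this
  exact (rankIn_lt_card hA.1 ha haq).ne (this.trans hAB.symm)

lemma shapeWord_injOn : Set.InjOn shapeWord {A : Finset (Fin n) | IsShape A} := by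
  intro A hA B hB h
  have hp := A.isGreatest_max' hA.nonempty
  have hq := B.isGreatest_max' hB.nonempty
  have hAB : #A = #B := by
    have := congrFun h ⟨0, (A.max' hA.nonempty).pos⟩
    rwa [hA.shapeWord_zero, hB.shapeWord_zero] at this
  have hpq := le_antisymm (le_of_isGreatest_of_shapeWord_eq hq hp hAB.symm h.symm)
    (le_of_isGreatest_of_shapeWord_eq hp hq hAB h)
  rw [← hpq] at hq
  exact (subset_of_shapeWord_eq hp hq hAB h).antisymm (subset_of_shapeWord_eq hq hp hAB.symm h.symm)

end shapeWord

open Classical in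
noncomputable def shapeOf {n : ℕ} (x : Fin n → ℕ) (q : Fin n) : Finset (Fin n) :=
  {i | (i ∈ Nub n x ∧ x i < maxVal n x) ∨ i = q}

section Structure

variable {n : ℕ} {x : Fin n → ℕ} {q : Fin n}

lemma le_maxVal (i : Fin n) : x i ≤ maxVal n x := le_sup (mem_univ i)

lemma exists_mem_nub_apply_eq (j : Fin n) : ∃ i ∈ Nub n x, x i = x j := by
  classical
  obtain ⟨i, hi, hmin⟩ := exists_min_image (univ.filter fun i => x i = x j) id ⟨j, by simp⟩
  have hxi : x i = x j := (mem_filter.1 hi).2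
  exact ⟨i, fun k hki hk => not_lt_of_ge (hmin k (by simp [hk, hxi])) hki, hxi⟩

lemma lt_succ_of_mem_nub (h : Ascbot n x = Nub n x) {i : Fin n} (hi : i ∈ Nub n x)
    (h0 : (i : ℕ) ≠ 0) : ∃ hs : (i : ℕ) + 1 < n, x i < x ⟨i + 1, hs⟩ := by
  rw [← h] at hi
  exact hi.resolve_left h0

lemma succ_le_of_lt_of_apply_eq (h : Ascbot n x = Nub n x) {i j : Fin n} (hij : i < j)
    (hx : x i = x j) (hj : (j : ℕ) + 1 < n) : x ⟨j + 1, hj⟩ ≤ x j := by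
  have : j ∉ Ascbot n x := h ▸ fun hnub => hnub i hij hx
  simp only [Ascbot, Set.mem_ofPred_eq, not_or, not_exists, not_lt] at this
  exact this.2 hj

lemma apply_zero_eq_maxVal (h : Ascbot n x = Nub n x) (hn : 0 < n) : x ⟨0, hn⟩ = maxVal n x := by
  obtain ⟨j, -, hj⟩ : ∃ j ∈ univ, maxVal n x = x j :=
    exists_mem_eq_sup univ (univ_nonempty_iff.2 ⟨⟨0, hn⟩⟩) x
  obtain ⟨i, hi, hij⟩ := exists_mem_nub_apply_eq (x := x) j
  obtain rfl : i = ⟨0, hn⟩ := by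
    refine Fin.ext (by_contra fun h0 => ?_)
    obtain ⟨hs, hlt⟩ := lt_succ_of_mem_nub h hi h0
    have := le_maxVal (x := x) ⟨i + 1, hs⟩
    omega
  omega

lemma val_ne_zero_of_ne_maxVal (h : Ascbot n x = Nub n x) {i : Fin n} (hi : x i ≠ maxVal n x) :
    (i : ℕ) ≠ 0 := fun h0 => hi <| by
  rw [show i = ⟨0, i.pos⟩ from Fin.ext h0]
  exact apply_zero_eq_maxVal h _

lemma le_of_lt_of_ne_maxVal (h : Ascbot n x = Nub n x) (hav : Avoids321 n x) {j k : Fin n}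
    (hjk : j < k) (hj : x j ≠ maxVal n x) : x j ≤ x k := by
  by_contra! hkj
  have h0 := apply_zero_eq_maxVal h j.pos
  have hj0 : (⟨0, j.pos⟩ : Fin n) < j :=
    Fin.lt_def.2 (Nat.pos_of_ne_zero (val_ne_zero_of_ne_maxVal h hj))
  exact hav ⟨_, j, k, hj0, hjk, (lt_of_le_of_ne (le_maxVal j) hj).trans_eq h0.symm, hkj⟩

lemma apply_eq_of_le_of_repeat (h : Ascbot n x = Nub n x) (hav : Avoids321 n x) {i j : Fin n}
    (hij : i < j) (hx : x i = x j) (hj : x j ≠ maxVal n x) {k : Fin n} (hjk : j ≤ k) :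
    x k = x j := by
  suffices ∀ t, (j : ℕ) ≤ t → ∀ ht : t < n, x ⟨t, ht⟩ = x j from this k hjk k.2
  intro t ht
  induction t, ht using Nat.le_induction with
  | base => exact fun _ => rfl
  | succ t hjt ih =>
    intro hk
    have hxt : x ⟨t, by omega⟩ = x j := ih _
    have hit : i < ⟨t, by omega⟩ := by simp only [Fin.lt_def]; omega
    have hdesc : x ⟨t + 1, hk⟩ ≤ x ⟨t, by omega⟩ :=
      succ_le_of_lt_of_apply_eq h hit (hx.trans hxt.symm) hk
    have hasc := le_of_lt_of_ne_maxVal h hav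
      (show (⟨t, by omega⟩ : Fin n) < ⟨t + 1, hk⟩ by simp only [Fin.lt_def]; omega) (by rwa [hxt])
    omega

lemma exists_lt_apply_eq_maxVal_sub_one (hx : IsRAS n x) (hm : 2 ≤ maxVal n x)
    (hq : IsGreatest {i | x i = maxVal n x} q) : ∃ p < q, x p = maxVal n x - 1 := by
  obtain ⟨j, hj⟩ := hx.1.2 (maxVal n x - 1) (by omega) (Nat.sub_le _ _)
  obtain ⟨p, hp, hpj⟩ := exists_mem_nub_apply_eq (x := x) j
  obtain ⟨hs, hlt⟩ := lt_succ_of_mem_nub hx.2 hp (val_ne_zero_of_ne_maxVal hx.2 (by omega))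
  have hsq : (⟨p + 1, hs⟩ : Fin n) ≤ q := hq.2 (le_antisymm (le_maxVal _) (by omega))
  exact ⟨p, by simp only [Fin.le_def, Fin.lt_def] at hsq ⊢; omega, hpj.trans hj⟩

lemma apply_eq_maxVal_sub_one_of_gt (hx : IsRAS n x) (hav : Avoids321 n x) (hm : 2 ≤ maxVal n x)
    (hq : IsGreatest {i | x i = maxVal n x} q) {i : Fin n} (hqi : q < i) :
    x i = maxVal n x - 1 := by
  obtain ⟨p, hpq, hp⟩ := exists_lt_apply_eq_maxVal_sub_one hx hm hq
  have := le_of_lt_of_ne_maxVal hx.2 hav (hpq.trans hqi) (by omega)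
  have := le_maxVal (x := x) i
  have : x i ≠ maxVal n x := fun h => not_lt_of_ge (hq.2 h) hqi
  omega

lemma lt_of_mem_nub_of_lt_maxVal (hx : IsRAS n x) (hav : Avoids321 n x) (hm : 2 ≤ maxVal n x)
    (hq : IsGreatest {i | x i = maxVal n x} q) {i : Fin n} (hi : i ∈ Nub n x)
    (him : x i < maxVal n x) : i < q := by
  by_contra! hqi
  rcases hqi.lt_or_eq with hqi | rfl
  · obtain ⟨p, hpq, hp⟩ := exists_lt_apply_eq_maxVal_sub_one hx hm hq
    exact hi p (hpq.trans hqi) (hp.trans (apply_eq_maxVal_sub_one_of_gt hx hav hm hq hqi).symm)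
  · exact him.ne hq.1

lemma mem_nub_of_lt_of_ne_maxVal (h : Ascbot n x = Nub n x) (hav : Avoids321 n x)
    (hq : x q = maxVal n x) {i : Fin n} (hiq : i < q) (hi : x i ≠ maxVal n x) : i ∈ Nub n x :=
  fun _ hji hj => hi ((apply_eq_of_le_of_repeat h hav hji hj hi hiq.le).symm.trans hq)

lemma mem_shapeOf {i : Fin n} : i ∈ shapeOf x q ↔ (i ∈ Nub n x ∧ x i < maxVal n x) ∨ i = q := by
  simp [shapeOf]

lemma isGreatest_shapeOf (hx : IsRAS n x) (hav : Avoids321 n x) (hm : 2 ≤ maxVal n x)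
    (hq : IsGreatest {i | x i = maxVal n x} q) : IsGreatest (shapeOf x q : Set (Fin n)) q :=
  ⟨mem_shapeOf.2 (Or.inr rfl), fun _ hi => (mem_shapeOf.1 hi).elim
    (fun h => (lt_of_mem_nub_of_lt_maxVal hx hav hm hq h.1 h.2).le) le_of_eq⟩

lemma strictMonoOn_shapeOf (hx : IsRAS n x) (hav : Avoids321 n x) (hm : 2 ≤ maxVal n x)
    (hq : IsGreatest {i | x i = maxVal n x} q) : StrictMonoOn x (shapeOf x q : Set (Fin n)) := by
  intro a ha b hb hab
  have hbq := (isGreatest_shapeOf hx hav hm hq).2 hb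
  obtain ⟨-, hax⟩ := (mem_shapeOf.1 ha).resolve_right fun h => not_lt_of_ge hbq (h ▸ hab)
  rcases mem_shapeOf.1 hb with ⟨hbnub, -⟩ | rfl
  · exact lt_of_le_of_ne (le_of_lt_of_ne_maxVal hx.2 hav hab hax.ne) (hbnub a hab)
  · exact hax.trans_eq hq.1.symm

lemma exists_mem_shapeOf_apply_eq (hx : IsRAS n x) (hq : x q = maxVal n x) {v : ℕ} (hv1 : 1 ≤ v)
    (hv : v ≤ maxVal n x) : ∃ b ∈ shapeOf x q, x b = v := by
  rcases hv.lt_or_eq with hv | rfl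
  · obtain ⟨j, hj⟩ := hx.1.2 v hv1 hv.le
    obtain ⟨i, hi, hij⟩ := exists_mem_nub_apply_eq (x := x) j
    exact ⟨i, mem_shapeOf.2 (Or.inl ⟨hi, (hij.trans hj).trans_lt hv⟩), hij.trans hj⟩
  · exact ⟨q, mem_shapeOf.2 (Or.inr rfl), hq⟩

lemma apply_eq_rankIn_shapeOf (hx : IsRAS n x) (hav : Avoids321 n x) (hm : 2 ≤ maxVal n x)
    (hq : IsGreatest {i | x i = maxVal n x} q) {a : Fin n} (ha : a ∈ shapeOf x q) :
    x a = rankIn (shapeOf x q) a :=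
  (strictMonoOn_shapeOf hx hav hm hq).eq_rankIn (fun b _ => (hx.1.1 b).1)
    (fun _ hv1 hv => exists_mem_shapeOf_apply_eq hx hq.1 hv1 (hv.trans (le_maxVal a))) ha

lemma card_shapeOf (hx : IsRAS n x) (hav : Avoids321 n x) (hm : 2 ≤ maxVal n x)
    (hq : IsGreatest {i | x i = maxVal n x} q) : #(shapeOf x q) = maxVal n x := by
  have hA := isGreatest_shapeOf hx hav hm hq
  rw [← rankIn_of_forall_le fun b hb => hA.2 hb, ← apply_eq_rankIn_shapeOf hx hav hm hq hA.1, hq.1]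

lemma isShape_shapeOf (hx : IsRAS n x) (hav : Avoids321 n x) (hm : 2 ≤ maxVal n x)
    (hq : IsGreatest {i | x i = maxVal n x} q) : IsShape (shapeOf x q) := by
  refine ⟨fun a ha h0 => ?_, (card_shapeOf hx hav hm hq).symm ▸ hm⟩
  rcases mem_shapeOf.1 ha with ⟨-, hlt⟩ | rfl
  · exact val_ne_zero_of_ne_maxVal hx.2 hlt.ne h0
  · obtain ⟨p, hpq, -⟩ := exists_lt_apply_eq_maxVal_sub_one hx hm hq
    omega

lemma shapeWord_shapeOf (hx : IsRAS n x) (hav : Avoids321 n x) (hm : 2 ≤ maxVal n x)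
    (hq : IsGreatest {i | x i = maxVal n x} q) : shapeWord (shapeOf x q) = x := by
  have hA := isGreatest_shapeOf hx hav hm hq
  have hcard := card_shapeOf hx hav hm hq
  funext i
  by_cases hiA : i ∈ shapeOf x q
  · rw [shapeWord_of_mem hiA, apply_eq_rankIn_shapeOf hx hav hm hq hiA]
  rcases lt_or_gt_of_ne (fun h : i = q => hiA (h ▸ hA.1)) with hiq | hqi
  · rw [shapeWord_of_lt hA.1 hiA hiq, hcard]
    by_contra hne
    exact hiA (mem_shapeOf.2 (Or.inl ⟨mem_nub_of_lt_of_ne_maxVal hx.2 hav hq.1 hiq (Ne.symm hne),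
      lt_of_le_of_ne (le_maxVal i) (Ne.symm hne)⟩))
  · rw [shapeWord_of_gt hA hqi, hcard, apply_eq_maxVal_sub_one_of_gt hx hav hm hq hqi]

lemma exists_isShape_shapeWord_eq (hx : IsRAS n x) (hav : Avoids321 n x) (hm : 2 ≤ maxVal n x) :
    ∃ A : Finset (Fin n), IsShape A ∧ shapeWord A = x := by
  classical
  obtain ⟨j, hj⟩ := hx.1.2 (maxVal n x) (by omega) le_rfl
  obtain ⟨q, hq, hqmax⟩ :=
    exists_max_image (univ.filter fun i => x i = maxVal n x) id ⟨j, by simp [hj]⟩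
  have hq' : IsGreatest {i | x i = maxVal n x} q :=
    ⟨(mem_filter.1 hq).2, fun i hi => hqmax i (by simpa using hi)⟩
  exact ⟨shapeOf x q, isShape_shapeOf hx hav hm hq', shapeWord_shapeOf hx hav hm hq'⟩

lemma isRAS_const_one : IsRAS n fun _ => 1 := by
  refine ⟨⟨fun i => ⟨le_rfl, i.pos⟩, fun v hv1 hv => ?_⟩, ?_⟩
  · obtain ⟨i, -, -⟩ := Finset.lt_sup_iff.1 (show 0 < maxVal n fun _ => 1 by omega)
    exact ⟨i, le_antisymm (hv.trans (Finset.sup_le fun _ _ => le_rfl)) hv1 |>.symm⟩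
  · ext i
    constructor
    · rintro (h0 | ⟨_, hlt⟩) j hji
      · omega
      · exact absurd hlt (lt_irrefl 1)
    · intro hi
      left
      by_contra h0
      exact hi ⟨0, i.pos⟩ (by simp only [Fin.lt_def]; omega) rfl

lemma avoids321_const (c : ℕ) : Avoids321 n fun _ => c := by
  rintro ⟨i, j, k, -, -, hji, -⟩
  exact lt_irrefl c hji

theorem isRAS_and_avoids321_iff :
    IsRAS n x ∧ Avoids321 n x ↔ x = (fun _ => 1) ∨ ∃ A, IsShape A ∧ shapeWord A = x := by
  constructor
  · rintro ⟨hx, hav⟩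
    by_cases hm : 2 ≤ maxVal n x
    · exact Or.inr (exists_isShape_shapeWord_eq hx hav hm)
    · left
      funext i
      have := (hx.1.1 i).1
      have := le_maxVal (x := x) i
      omega
  · rintro (rfl | ⟨A, hA, rfl⟩)
    · exact ⟨isRAS_const_one, avoids321_const 1⟩
    · exact ⟨hA.isRAS, hA.avoids321⟩

end Structure

theorem stmt11 (n : ℕ) (hn : 1 ≤ n) :
    {x : Fin n → ℕ | IsRAS n x ∧ Avoids321 n x}.ncard = 2 ^ (n - 1) - n + 1 := by
  classical
  set T := {A ∈ (univ.erase (⟨0, hn⟩ : Fin n)).powerset | 2 ≤ #A}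
  have hT : ∀ A, A ∈ T ↔ IsShape A := fun A => by
    simp [T, IsShape, subset_iff, Fin.ext_iff]
  have hset : {x : Fin n → ℕ | IsRAS n x ∧ Avoids321 n x} =
      ↑(insert (fun _ => 1) (T.image shapeWord)) := by
    ext x
    simp [isRAS_and_avoids321_iff, hT]
  have hone : (fun _ => 1) ∉ T.image shapeWord := by
    simp only [mem_image, hT, not_exists, not_and]
    intro A hA h
    have : 1 = #A := (congrFun h ⟨0, hn⟩).symm.trans (hA.shapeWord_zero hn)
    have := hA.2
    omega
  have hcount : #T + (n - 1) + 1 = 2 ^ (n - 1) := by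
    simpa using card_filter_two_le_card_powerset (univ.erase (⟨0, hn⟩ : Fin n))
  rw [hset, Set.ncard_coe_finset, card_insert_of_notMem hone,
    card_image_of_injOn fun A hA B hB => shapeWord_injOn ((hT A).1 hA) ((hT B).1 hB)]
  omega
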